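/- Let π : (X,G) → (Y,G) be a factor map between G-systems and U, V finite open covers of X. Then max{D(G,U|π), D(G,V|π)} ≤ D(G, U∨V | π) ≤ max{D(G,U|π), D(G,V|π), min{D̄(G,U|π), D̄(G,V|π)}}, where D denotes the relative lower entropy dimension and D̄ the relative upper entropy dimension of a cover. -/

import Mathlib

open Filter Topology Pointwise
open scoped ENNReal

/-- A Følner sequence for a group `G`. -/
def IsFolnerSeq (G : Type*) [Group G] (F : ℕ → Finset G) : Prop :=
  (∀ n, (F n).Nonempty) ∧
    ∀ (K : Finset G) (δ : ℝ), 0 < δ →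
      ∀ᶠ n in atTop,
        ((symmDiff ((K : Set G) * ((F n : Set G))) ((F n : Set G))).ncard : ℝ) <
          δ * ((F n).card : ℝ)

/-- Amenability of a (countable discrete) group via almost invariant finite sets. -/
def IsAmenableGrp (G : Type*) [Group G] : Prop :=
  ∀ K : Finset G, K.Nonempty → ∀ δ : ℝ, 0 < δ →
    ∃ F : Finset G, F.Nonempty ∧
      ((symmDiff ((K : Set G) * (F : Set G)) (F : Set G)).ncard : ℝ) < δ * (F.card : ℝ)

/-- The finite set `A ∩ S`. -/
noncomputable def interF {G : Type*} (A : Finset G) (S : Set G) : Finset G :=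
  @Finset.filter G (fun g => g ∈ S) (Classical.decPred _) A

/-- `S` belongs to `𝓘(G)` : `|S ∩ F n| → ∞`. -/
def InI {G : Type*} (F : ℕ → Finset G) (S : Set G) : Prop :=
  Tendsto (fun n => (interF (F n) S).card) atTop atTop

/-- `D̄(S, α) = limsup_n |S ∩ F n| / |F n|^α`. -/
noncomputable def DbarAt {G : Type*} (F : ℕ → Finset G) (S : Set G) (α : ℝ) : ℝ≥0∞ :=
  atTop.limsup fun n =>
    ((interF (F n) S).card : ℝ≥0∞) / ENNReal.ofReal (((F n).card : ℝ) ^ α)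

/-- `D̲(S, α) = liminf_n |S ∩ F n| / |F n|^α`. -/
noncomputable def DlowAt {G : Type*} (F : ℕ → Finset G) (S : Set G) (α : ℝ) : ℝ≥0∞ :=
  atTop.liminf fun n =>
    ((interF (F n) S).card : ℝ≥0∞) / ENNReal.ofReal (((F n).card : ℝ) ^ α)

/-- The upper dimension `D̄(S)` of a subset `S ⊆ G`. -/
noncomputable def upperDim {G : Type*} (F : ℕ → Finset G) (S : Set G) : ℝ :=
  sInf {α : ℝ | 0 ≤ α ∧ DbarAt F S α = 0}

/-- The lower dimension `D̲(S)` of a subset `S ⊆ G`. -/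
noncomputable def lowerDim {G : Type*} (F : ℕ → Finset G) (S : Set G) : ℝ :=
  sInf {α : ℝ | 0 ≤ α ∧ DlowAt F S α = 0}

/-- A finite open cover of `X`. -/
def IsOpenCover {X : Type*} [TopologicalSpace X] (𝒰 : Set (Set X)) : Prop :=
  𝒰.Finite ∧ (∀ U ∈ 𝒰, IsOpen U) ∧ ⋃₀ 𝒰 = Set.univ

/-- Minimal number of members of `𝒰` needed to cover `E`. -/
noncomputable def coverNum {X : Type*} (𝒰 : Set (Set X)) (E : Set X) : ℕ :=
  sInf {k | ∃ t : Finset (Set X), ↑t ⊆ 𝒰 ∧ t.card = k ∧ E ⊆ ⋃₀ (t : Set (Set X))}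

/-- `N(𝒰 | π) = sup_y` of the covering number of the fiber `π ⁻¹ y`. -/
noncomputable def NRel {X Y : Type*} (𝒰 : Set (Set X)) (π : X → Y) : ℕ :=
  ⨆ y : Y, coverNum 𝒰 (π ⁻¹' {y})

/-- A factor map between `G`-systems. -/
def IsFactorMap (G : Type*) {X Y : Type*} [Group G] [TopologicalSpace X] [TopologicalSpace Y]
    [MulAction G X] [MulAction G Y] (π : X → Y) : Prop :=
  Continuous π ∧ Function.Surjective π ∧ ∀ (g : G) (x : X), π (g • x) = g • π x

/-- The join `⋁_{g ∈ B} g⁻¹ 𝒰`. -/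
def dynJoin {G X : Type*} [Group G] [MulAction G X] (B : Finset G) (𝒰 : Set (Set X)) :
    Set (Set X) :=
  {W | ∃ f : G → Set X, (∀ g ∈ B, f g ∈ 𝒰) ∧ W = ⋂ g ∈ B, (fun x => g • x) ⁻¹' f g}

/-- `h̄(G, 𝒰, α | π)`. -/
noncomputable def hRelU {G X Y : Type*} [Group G] [MulAction G X]
    (F : ℕ → Finset G) (𝒰 : Set (Set X)) (π : X → Y) (α : ℝ) : ℝ≥0∞ :=
  atTop.limsup fun n =>
    ENNReal.ofReal (Real.log (NRel (dynJoin (F n) 𝒰) π)) /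
      ENNReal.ofReal (((F n).card : ℝ) ^ α)

/-- `h̲(G, 𝒰, α | π)`. -/
noncomputable def hRelL {G X Y : Type*} [Group G] [MulAction G X]
    (F : ℕ → Finset G) (𝒰 : Set (Set X)) (π : X → Y) (α : ℝ) : ℝ≥0∞ :=
  atTop.liminf fun n =>
    ENNReal.ofReal (Real.log (NRel (dynJoin (F n) 𝒰) π)) /
      ENNReal.ofReal (((F n).card : ℝ) ^ α)

/-- The relative upper entropy dimension `D̄(G, 𝒰 | π)` of a cover. -/
noncomputable def DU {G X Y : Type*} [Group G] [MulAction G X]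
    (F : ℕ → Finset G) (𝒰 : Set (Set X)) (π : X → Y) : ℝ :=
  sInf {α : ℝ | 0 ≤ α ∧ hRelU F 𝒰 π α = 0}

/-- The relative lower entropy dimension `D̲(G, 𝒰 | π)` of a cover. -/
noncomputable def DL {G X Y : Type*} [Group G] [MulAction G X]
    (F : ℕ → Finset G) (𝒰 : Set (Set X)) (π : X → Y) : ℝ :=
  sInf {α : ℝ | 0 ≤ α ∧ hRelL F 𝒰 π α = 0}

/-- The relative upper entropy dimension `D̄(X, G | π)` of the system. -/
noncomputable def DUSys {G X Y : Type*} [Group G] [TopologicalSpace X] [MulAction G X]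
    (F : ℕ → Finset G) (π : X → Y) : ℝ :=
  sSup {d : ℝ | ∃ 𝒰 : Set (Set X), IsOpenCover 𝒰 ∧ d = DU F 𝒰 π}

/-- The relative lower entropy dimension `D̲(X, G | π)` of the system. -/
noncomputable def DLSys {G X Y : Type*} [Group G] [TopologicalSpace X] [MulAction G X]
    (F : ℕ → Finset G) (π : X → Y) : ℝ :=
  sSup {d : ℝ | ∃ 𝒰 : Set (Set X), IsOpenCover 𝒰 ∧ d = DL F 𝒰 π}

/-- `(1 / |F n ∩ S|) log N(⋁_{g ∈ F n ∩ S} g⁻¹ 𝒰 | π)`. -/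
noncomputable def entAlong {G X Y : Type*} [Group G] [MulAction G X]
    (F : ℕ → Finset G) (S : Set G) (𝒰 : Set (Set X)) (π : X → Y) : ℕ → ℝ≥0∞ :=
  fun n =>
    ENNReal.ofReal (Real.log (NRel (dynJoin (interF (F n) S) 𝒰) π)) /
      ((interF (F n) S).card : ℝ≥0∞)

/-- `S` is a relative entropy generating set of `𝒰` relative to `π`. -/
def IsEntGen {G X Y : Type*} [Group G] [MulAction G X]
    (F : ℕ → Finset G) (S : Set G) (𝒰 : Set (Set X)) (π : X → Y) : Prop :=
  InI F S ∧ 0 < atTop.liminf (entAlong F S 𝒰 π)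

/-- `S ∈ 𝒫(G, 𝒰 | π)` : positive relative upper entropy along `S`. -/
def InP {G X Y : Type*} [Group G] [MulAction G X]
    (F : ℕ → Finset G) (S : Set G) (𝒰 : Set (Set X)) (π : X → Y) : Prop :=
  InI F S ∧ 0 < atTop.limsup (entAlong F S 𝒰 π)

/-- `D̄_e(G, 𝒰 | π)`. -/
noncomputable def DeU {G X Y : Type*} [Group G] [MulAction G X]
    (F : ℕ → Finset G) (𝒰 : Set (Set X)) (π : X → Y) : ℝ :=
  sSup {d : ℝ | ∃ S : Set G, IsEntGen F S 𝒰 π ∧ d = upperDim F S}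

/-- `D̲_e(G, 𝒰 | π)`. -/
noncomputable def DeL {G X Y : Type*} [Group G] [MulAction G X]
    (F : ℕ → Finset G) (𝒰 : Set (Set X)) (π : X → Y) : ℝ :=
  sSup {d : ℝ | ∃ S : Set G, IsEntGen F S 𝒰 π ∧ d = lowerDim F S}

/-- `D̄_p(G, 𝒰 | π)`. -/
noncomputable def DpU {G X Y : Type*} [Group G] [MulAction G X]
    (F : ℕ → Finset G) (𝒰 : Set (Set X)) (π : X → Y) : ℝ :=
  sSup {d : ℝ | ∃ S : Set G, InP F S 𝒰 π ∧ d = upperDim F S}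

/-- `D̲_p(G, 𝒰 | π)`. -/
noncomputable def DpL {G X Y : Type*} [Group G] [MulAction G X]
    (F : ℕ → Finset G) (𝒰 : Set (Set X)) (π : X → Y) : ℝ :=
  sSup {d : ℝ | ∃ S : Set G, InP F S 𝒰 π ∧ d = lowerDim F S}

/-- `D̄_e(X, G | π)`. -/
noncomputable def DeUSys {G X Y : Type*} [Group G] [TopologicalSpace X] [MulAction G X]
    (F : ℕ → Finset G) (π : X → Y) : ℝ :=
  sSup {d : ℝ | ∃ 𝒰 : Set (Set X), IsOpenCover 𝒰 ∧ d = DeU F 𝒰 π}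

/-- `D̲_p(X, G | π)`. -/
noncomputable def DpLSys {G X Y : Type*} [Group G] [TopologicalSpace X] [MulAction G X]
    (F : ℕ → Finset G) (π : X → Y) : ℝ :=
  sSup {d : ℝ | ∃ 𝒰 : Set (Set X), IsOpenCover 𝒰 ∧ d = DpL F 𝒰 π}

/-- The cover `{X ∖ cl B(x i, 1/k) : i}` associated with a tuple. -/
def ballCover {X : Type*} [MetricSpace X] {n : ℕ} (x : Fin n → X) (k : ℕ) : Set (Set X) :=
  {V | ∃ i : Fin n, V = (Metric.closedBall (x i) (1 / (k : ℝ)))ᶜ}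

/-- The relative entropy dimension `D̄(x₁, …, x_n | π)` of a tuple. -/
noncomputable def tupleDim {G X Y : Type*} [Group G] [MetricSpace X] [MulAction G X] {n : ℕ}
    (F : ℕ → Finset G) (x : Fin n → X) (π : X → Y) : ℝ :=
  limUnder atTop fun k : ℕ => DU F (ballCover x k) π

/-- The tuple lies on the diagonal. -/
def IsDiag {X : Type*} {n : ℕ} (x : Fin n → X) : Prop := ∀ i j, x i = x j

/-- The `n`-th relative dimension set `𝒟_n(X, G | π)`. -/
noncomputable def dimSet {G X Z : Type*} [Group G] [MetricSpace X] [MulAction G X]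
    (F : ℕ → Finset G) (π : X → Z) (n : ℕ) : Set ℝ :=
  {α : ℝ | 0 ≤ α ∧ ∃ x : Fin n → X, ¬ IsDiag x ∧ tupleDim F x π = α}

/-- The translated cover `g𝒰`. -/
def smulCover {G X : Type*} [SMul G X] (g : G) (𝒰 : Set (Set X)) : Set (Set X) :=
  (fun U => (fun x => g • x) '' U) '' 𝒰

/-- The join `𝒰 ∨ 𝒱` of two covers. -/
def covJoin {X : Type*} (𝒰 𝒱 : Set (Set X)) : Set (Set X) :=
  {W | ∃ U ∈ 𝒰, ∃ V ∈ 𝒱, W = U ∩ V}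

/-- A standard cover: two non-dense open sets covering `X`. -/
def IsStandardCover {X : Type*} [TopologicalSpace X] (𝒲 : Set (Set X)) : Prop :=
  ∃ U V : Set X, 𝒲 = {U, V} ∧ IsOpen U ∧ IsOpen V ∧ U ∪ V = Set.univ ∧
    ¬ Dense U ∧ ¬ Dense V

/-!
Write `a_n(𝒲) = log N(⋁_{g ∈ F_n} g⁻¹𝒲 | π)`. Joins commute with the dynamical join and
`N(𝒰 ∨ 𝒱 | π) ≤ N(𝒰 | π) N(𝒱 | π)`, so `max (a_n 𝒰) (a_n 𝒱) ≤ a_n (𝒰 ∨ 𝒱) ≤ a_n 𝒰 + a_n 𝒱`.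
The left inequality gives the lower bound. For the upper bound take `α` above the right-hand
side, say with `D̄(G, 𝒰 | π) < α`: then `a_n 𝒰 / |F_n|^α → 0` while `a_n 𝒱 / |F_n|^α` has
liminf `0`, hence so does `a_n (𝒰 ∨ 𝒱) / |F_n|^α`.
Both steps need the exponent sets to be nonempty; `α = 2` lies in them when `|F_n| → ∞`,
because `a_n 𝒲 ≤ |F_n| log |𝒲|`. Otherwise the increasing sequence `F_n` is eventually
constant and all these dimensions are `0`.
-/

section Covers

variable {X Y : Type*}

def IsFiniteCover (𝒲 : Set (Set X)) : Prop :=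
  𝒲.Finite ∧ ⋃₀ 𝒲 = Set.univ

lemma IsOpenCover.isFiniteCover [TopologicalSpace X] {𝒲 : Set (Set X)} (h : IsOpenCover 𝒲) :
    IsFiniteCover 𝒲 :=
  ⟨h.1, h.2.2⟩

lemma covJoin_comm (𝒰 𝒱 : Set (Set X)) : covJoin 𝒰 𝒱 = covJoin 𝒱 𝒰 := by
  ext W
  constructor <;> rintro ⟨U, hU, V, hV, rfl⟩ <;> exact ⟨V, hV, U, hU, Set.inter_comm _ _⟩

lemma IsFiniteCover.covJoin {𝒰 𝒱 : Set (Set X)} (h𝒰 : IsFiniteCover 𝒰)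
    (h𝒱 : IsFiniteCover 𝒱) : IsFiniteCover (covJoin 𝒰 𝒱) := by
  refine ⟨(h𝒰.1.image2 (· ∩ ·) h𝒱.1).subset ?_, Set.eq_univ_of_forall fun x => ?_⟩
  · rintro W ⟨U, hU, V, hV, rfl⟩
    exact Set.mem_image2_of_mem hU hV
  · obtain ⟨U, hU, hxU⟩ := Set.mem_sUnion.1 (h𝒰.2.symm ▸ Set.mem_univ x)
    obtain ⟨V, hV, hxV⟩ := Set.mem_sUnion.1 (h𝒱.2.symm ▸ Set.mem_univ x)
    exact ⟨U ∩ V, ⟨U, hU, V, hV, rfl⟩, hxU, hxV⟩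

lemma coverNum_le_card {𝒲 : Set (Set X)} {E : Set X} {t : Finset (Set X)} (ht : ↑t ⊆ 𝒲)
    (hE : E ⊆ ⋃₀ ↑t) : coverNum 𝒲 E ≤ t.card :=
  Nat.sInf_le ⟨t, ht, rfl, hE⟩

lemma IsFiniteCover.exists_card_eq_coverNum {𝒲 : Set (Set X)} (h : IsFiniteCover 𝒲)
    (E : Set X) :
    ∃ t : Finset (Set X), ↑t ⊆ 𝒲 ∧ t.card = coverNum 𝒲 E ∧ E ⊆ ⋃₀ ↑t :=
  Nat.sInf_mem (s := {k | ∃ t : Finset (Set X), (t : Set (Set X)) ⊆ 𝒲 ∧ t.card = k ∧ E ⊆ ⋃₀ ↑t})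
    ⟨_, h.1.toFinset, by simp, rfl, by simp [h.2]⟩

lemma IsFiniteCover.coverNum_le_ncard {𝒲 : Set (Set X)} (h : IsFiniteCover 𝒲) (E : Set X) :
    coverNum 𝒲 E ≤ 𝒲.ncard := by
  rw [Set.ncard_eq_toFinset_card 𝒲 h.1]
  exact coverNum_le_card (by simp) (by simp [h.2])

lemma IsFiniteCover.coverNum_le_NRel {𝒲 : Set (Set X)} (h : IsFiniteCover 𝒲) (π : X → Y)
    (y : Y) : coverNum 𝒲 (π ⁻¹' {y}) ≤ NRel 𝒲 π :=
  le_ciSup (f := fun y => coverNum 𝒲 (π ⁻¹' {y}))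
    ⟨𝒲.ncard, Set.forall_mem_range.2 fun _ => h.coverNum_le_ncard _⟩ y

lemma IsFiniteCover.NRel_le_ncard {𝒲 : Set (Set X)} (h : IsFiniteCover 𝒲) (π : X → Y) :
    NRel 𝒲 π ≤ 𝒲.ncard :=
  ciSup_le' fun _ => h.coverNum_le_ncard _

lemma coverNum_le_coverNum_of_refines {𝒲 𝒲' : Set (Set X)} (h𝒲' : IsFiniteCover 𝒲')
    (href : ∀ W ∈ 𝒲', ∃ U ∈ 𝒲, W ⊆ U) (E : Set X) : coverNum 𝒲 E ≤ coverNum 𝒲' E := by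
  classical
  obtain ⟨t, ht, htcard, hEt⟩ := h𝒲'.exists_card_eq_coverNum E
  choose! r hr𝒲 hsub using href
  calc coverNum 𝒲 E ≤ (t.image r).card := by
        refine coverNum_le_card (by simpa [Set.subset_def] using fun W hW => hr𝒲 W (ht hW))
          fun x hx => ?_
        obtain ⟨W, hW, hxW⟩ := hEt hx
        exact ⟨r W, by simpa using ⟨W, hW, rfl⟩, hsub W (ht hW) hxW⟩
    _ ≤ t.card := Finset.card_image_le
    _ = coverNum 𝒲' E := htcard

lemma coverNum_covJoin_le {𝒰 𝒱 : Set (Set X)} (h𝒰 : IsFiniteCover 𝒰) (h𝒱 : IsFiniteCover 𝒱)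
    (E : Set X) : coverNum (covJoin 𝒰 𝒱) E ≤ coverNum 𝒰 E * coverNum 𝒱 E := by
  classical
  obtain ⟨t, ht, htcard, hEt⟩ := h𝒰.exists_card_eq_coverNum E
  obtain ⟨s, hs, hscard, hEs⟩ := h𝒱.exists_card_eq_coverNum E
  calc coverNum (covJoin 𝒰 𝒱) E ≤ (Finset.image₂ (· ∩ ·) t s).card := by
        refine coverNum_le_card ?_ fun x hx => ?_
        · intro W hW
          obtain ⟨U, hU, V, hV, rfl⟩ := Finset.mem_image₂.1 hW
          exact ⟨U, ht hU, V, hs hV, rfl⟩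
        · obtain ⟨U, hU, hxU⟩ := hEt hx
          obtain ⟨V, hV, hxV⟩ := hEs hx
          exact ⟨U ∩ V, Finset.mem_image₂_of_mem hU hV, hxU, hxV⟩
    _ ≤ t.card * s.card := Finset.card_image₂_le _ _ _
    _ = coverNum 𝒰 E * coverNum 𝒱 E := by rw [htcard, hscard]

lemma NRel_le_NRel_covJoin {𝒰 𝒱 : Set (Set X)} (h𝒰 : IsFiniteCover 𝒰) (h𝒱 : IsFiniteCover 𝒱)
    (π : X → Y) : NRel 𝒰 π ≤ NRel (covJoin 𝒰 𝒱) π :=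
  ciSup_le' fun y =>
    (coverNum_le_coverNum_of_refines (h𝒰.covJoin h𝒱)
      (fun _ ⟨U, hU, _, _, hW⟩ => ⟨U, hU, hW ▸ Set.inter_subset_left⟩) _).trans
      ((h𝒰.covJoin h𝒱).coverNum_le_NRel π y)

lemma NRel_covJoin_le_mul {𝒰 𝒱 : Set (Set X)} (h𝒰 : IsFiniteCover 𝒰) (h𝒱 : IsFiniteCover 𝒱)
    (π : X → Y) : NRel (covJoin 𝒰 𝒱) π ≤ NRel 𝒰 π * NRel 𝒱 π :=
  ciSup_le' fun y => (coverNum_covJoin_le h𝒰 h𝒱 _).trans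
    (Nat.mul_le_mul (h𝒰.coverNum_le_NRel π y) (h𝒱.coverNum_le_NRel π y))

end Covers

section DynJoin

variable {G X Y : Type*} [Group G] [MulAction G X]

lemma dynJoin_subset_range (B : Finset G) (𝒲 : Set (Set X)) :
    dynJoin B 𝒲 ⊆ Set.range fun f : B → 𝒲 => ⋂ g : B, (fun x => (g : G) • x) ⁻¹' (f g : Set X) := by
  rintro W ⟨f, hf, rfl⟩
  exact ⟨fun g => ⟨f g, hf g g.2⟩, by simp [Set.iInter_subtype]⟩

lemma IsFiniteCover.dynJoin {𝒲 : Set (Set X)} (h : IsFiniteCover 𝒲) (B : Finset G) :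
    IsFiniteCover (_root_.dynJoin B 𝒲) := by
  have := h.1.to_subtype
  refine ⟨(Set.finite_range _).subset (dynJoin_subset_range B 𝒲), Set.eq_univ_of_forall fun x => ?_⟩
  have hcov (g : G) : ∃ U ∈ 𝒲, g • x ∈ U := Set.mem_sUnion.1 (h.2.symm ▸ Set.mem_univ _)
  choose f hf𝒲 hxf using hcov
  exact ⟨_, ⟨f, fun g _ => hf𝒲 g, rfl⟩, Set.mem_iInter₂.2 fun g _ => hxf g⟩

lemma IsFiniteCover.ncard_dynJoin_le {𝒲 : Set (Set X)} (h : IsFiniteCover 𝒲) (B : Finset G) :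
    (_root_.dynJoin B 𝒲).ncard ≤ 𝒲.ncard ^ B.card := by
  have := h.1.to_subtype
  calc (_root_.dynJoin B 𝒲).ncard
      ≤ (Set.range fun f : B → 𝒲 => ⋂ g : B, (fun x => (g : G) • x) ⁻¹' (f g : Set X)).ncard :=
        Set.ncard_le_ncard (dynJoin_subset_range B 𝒲) (Set.finite_range _)
    _ ≤ Nat.card (B → 𝒲) := Finite.card_range_le _
    _ = 𝒲.ncard ^ B.card := by simp [Nat.card_fun, Nat.card_coe_set_eq]

lemma IsFiniteCover.NRel_dynJoin_le {𝒲 : Set (Set X)} (h : IsFiniteCover 𝒲) (B : Finset G)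
    (π : X → Y) : NRel (_root_.dynJoin B 𝒲) π ≤ 𝒲.ncard ^ B.card :=
  ((h.dynJoin B).NRel_le_ncard π).trans (h.ncard_dynJoin_le B)

lemma dynJoin_covJoin (B : Finset G) (𝒰 𝒱 : Set (Set X)) :
    dynJoin B (covJoin 𝒰 𝒱) = covJoin (dynJoin B 𝒰) (dynJoin B 𝒱) := by
  ext W
  constructor
  · rintro ⟨f, hf, rfl⟩
    have hsplit (g : G) : ∃ U V, g ∈ B → U ∈ 𝒰 ∧ V ∈ 𝒱 ∧ f g = U ∩ V := by
      by_cases hg : g ∈ B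
      · obtain ⟨U, hU, V, hV, hfg⟩ := hf g hg
        exact ⟨U, V, fun _ => ⟨hU, hV, hfg⟩⟩
      · exact ⟨∅, ∅, fun h => absurd h hg⟩
    choose u v huv using hsplit
    refine ⟨_, ⟨u, fun g hg => (huv g hg).1, rfl⟩, _, ⟨v, fun g hg => (huv g hg).2.1, rfl⟩, ?_⟩
    ext x
    simp +contextual [(huv _ _).2.2, forall_and]
  · rintro ⟨_, ⟨u, hu, rfl⟩, _, ⟨v, hv, rfl⟩, rfl⟩
    refine ⟨fun g => u g ∩ v g, fun g hg => ⟨u g, hu g hg, v g, hv g hg, rfl⟩, ?_⟩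
    ext x
    simp [forall_and]

lemma NRel_dynJoin_le_NRel_dynJoin_covJoin {𝒰 𝒱 : Set (Set X)} (h𝒰 : IsFiniteCover 𝒰)
    (h𝒱 : IsFiniteCover 𝒱) (B : Finset G) (π : X → Y) :
    NRel (dynJoin B 𝒰) π ≤ NRel (dynJoin B (covJoin 𝒰 𝒱)) π := by
  rw [dynJoin_covJoin]
  exact NRel_le_NRel_covJoin (h𝒰.dynJoin B) (h𝒱.dynJoin B) π

lemma NRel_dynJoin_covJoin_le_mul {𝒰 𝒱 : Set (Set X)} (h𝒰 : IsFiniteCover 𝒰)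
    (h𝒱 : IsFiniteCover 𝒱) (B : Finset G) (π : X → Y) :
    NRel (dynJoin B (covJoin 𝒰 𝒱)) π ≤ NRel (dynJoin B 𝒰) π * NRel (dynJoin B 𝒱) π := by
  rw [dynJoin_covJoin]
  exact NRel_covJoin_le_mul (h𝒰.dynJoin B) (h𝒱.dynJoin B) π

end DynJoin

lemma Real.log_natCast_mono : Monotone fun n : ℕ => Real.log n := by
  intro m n hmn
  rcases Nat.eq_zero_or_pos m with rfl | hm
  · simpa using Real.log_natCast_nonneg n
  · exact Real.log_le_log (by exact_mod_cast hm) (by exact_mod_cast hmn)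

lemma Real.log_natCast_mul_le (m n : ℕ) :
    Real.log (m * n : ℕ) ≤ Real.log m + Real.log n := by
  rcases Nat.eq_zero_or_pos m with rfl | hm
  · simpa using Real.log_natCast_nonneg n
  rcases Nat.eq_zero_or_pos n with rfl | hn
  · simpa using Real.log_natCast_nonneg m
  rw [Nat.cast_mul, Real.log_mul (by positivity) (by positivity)]

section CritExp

/-- `DU F 𝒲 π` and `DL F 𝒲 π` are, by definition, `critExp (hRelU F 𝒲 π)` and
`critExp (hRelL F 𝒲 π)`. -/
noncomputable def critExp (P : ℝ → ℝ≥0∞) : ℝ :=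
  sInf {α : ℝ | 0 ≤ α ∧ P α = 0}

variable {P Q : ℝ → ℝ≥0∞} {α : ℝ}

lemma critExp_nonneg : 0 ≤ critExp P :=
  Real.sInf_nonneg fun _ h => h.1

lemma critExp_le (hα : 0 ≤ α) (hP : P α = 0) : critExp P ≤ α :=
  csInf_le ⟨0, fun _ h => h.1⟩ ⟨hα, hP⟩

lemma critExp_mono (hPQ : P ≤ Q) (hQ : ∃ α, 0 ≤ α ∧ Q α = 0) : critExp P ≤ critExp Q :=
  csInf_le_csInf ⟨0, fun _ h => h.1⟩ hQ fun α ⟨hα, hQα⟩ =>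
    ⟨hα, le_antisymm (hQα ▸ hPQ α) bot_le⟩

lemma eq_zero_of_critExp_lt (hP : Antitone P) (hne : ∃ β, 0 ≤ β ∧ P β = 0)
    (hα : critExp P < α) : P α = 0 := by
  obtain ⟨β, ⟨-, hβ⟩, hβα⟩ := exists_lt_of_csInf_lt hne hα
  exact le_antisymm (hβ ▸ hP hβα.le) bot_le

lemma critExp_eq_zero (hP : ∀ α β, P α = 0 → P β = 0) : critExp P = 0 := by
  by_cases h0 : P 0 = 0
  · exact le_antisymm (critExp_le le_rfl h0) critExp_nonneg
  · have hempty : {α : ℝ | 0 ≤ α ∧ P α = 0} = ∅ :=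
      Set.eq_empty_of_forall_notMem fun α ⟨_, hα⟩ => h0 (hP α 0 hα)
    -- `sInf ∅ = 0` in `ℝ`
    rw [critExp, hempty, Real.sInf_empty]

end CritExp

section EntropyDimension

variable {G X Y : Type*} [Group G] [MulAction G X] {F : ℕ → Finset G} {𝒲 : Set (Set X)}
  {π : X → Y} {α : ℝ}

noncomputable def logCoverRatio (F : ℕ → Finset G) (𝒲 : Set (Set X)) (π : X → Y) (α : ℝ)
    (n : ℕ) : ℝ≥0∞ :=
  ENNReal.ofReal (Real.log (NRel (dynJoin (F n) 𝒲) π)) / ENNReal.ofReal (((F n).card : ℝ) ^ α)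

lemma hRelU_eq_limsup : hRelU F 𝒲 π α = atTop.limsup (logCoverRatio F 𝒲 π α) := rfl

lemma hRelL_eq_liminf : hRelL F 𝒲 π α = atTop.liminf (logCoverRatio F 𝒲 π α) := rfl

lemma logCoverRatio_antitone (hFne : ∀ n, (F n).Nonempty) (n : ℕ) :
    Antitone fun α => logCoverRatio F 𝒲 π α n := by
  intro α β hαβ
  have hcard : (1 : ℝ) ≤ (F n).card := by exact_mod_cast (hFne n).card_pos
  exact ENNReal.div_le_div_left
    (ENNReal.ofReal_le_ofReal (Real.rpow_le_rpow_of_exponent_le hcard hαβ)) _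

lemma hRelU_antitone (hFne : ∀ n, (F n).Nonempty) : Antitone (hRelU F 𝒲 π) :=
  fun _ _ hαβ => limsup_le_limsup (.of_forall fun n => logCoverRatio_antitone hFne n hαβ)

lemma hRelL_antitone (hFne : ∀ n, (F n).Nonempty) : Antitone (hRelL F 𝒲 π) :=
  fun _ _ hαβ => liminf_le_liminf (.of_forall fun n => logCoverRatio_antitone hFne n hαβ)

lemma tendsto_logCoverRatio_of_one_lt (hFne : ∀ n, (F n).Nonempty)
    (htend : Tendsto (fun n => (F n).card) atTop atTop) (h𝒲 : IsFiniteCover 𝒲) (hα : 1 < α) :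
    Tendsto (logCoverRatio F 𝒲 π α) atTop (𝓝 0) := by
  set L := Real.log 𝒲.ncard
  have hbound (n : ℕ) : logCoverRatio F 𝒲 π α n ≤ ENNReal.ofReal (L * (F n).card ^ (1 - α)) := by
    have hcard : (0 : ℝ) < (F n).card := by exact_mod_cast (hFne n).card_pos
    have hlog : Real.log (NRel (dynJoin (F n) 𝒲) π) ≤ (F n).card * L := by
      rw [← Real.log_pow, ← Nat.cast_pow]
      exact Real.log_natCast_mono (h𝒲.NRel_dynJoin_le (F n) π)
    calc logCoverRatio F 𝒲 π α n
        ≤ ENNReal.ofReal ((F n).card * L) / ENNReal.ofReal (((F n).card : ℝ) ^ α) := by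
          unfold logCoverRatio; gcongr
      _ = ENNReal.ofReal (L * (F n).card ^ (1 - α)) := by
          rw [← ENNReal.ofReal_div_of_pos (by positivity), Real.rpow_sub hcard, Real.rpow_one]
          ring_nf
  have hlim : Tendsto (fun n => ENNReal.ofReal (L * (F n).card ^ (1 - α))) atTop (𝓝 0) := by
    have := ((tendsto_rpow_neg_atTop (by linarith : 0 < α - 1)).const_mul L).comp
      (tendsto_natCast_atTop_atTop.comp htend)
    simpa [Function.comp_def, show -(α - 1) = 1 - α by ring] using
      ENNReal.tendsto_ofReal this
  exact tendsto_of_tendsto_of_tendsto_of_le_of_le tendsto_const_nhds hlim (fun _ => bot_le) hbound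

lemma hRelU_eq_zero_of_one_lt (hFne : ∀ n, (F n).Nonempty)
    (htend : Tendsto (fun n => (F n).card) atTop atTop) (h𝒲 : IsFiniteCover 𝒲) (hα : 1 < α) :
    hRelU F 𝒲 π α = 0 :=
  (tendsto_logCoverRatio_of_one_lt hFne htend h𝒲 hα).limsup_eq

lemma hRelL_eq_zero_of_one_lt (hFne : ∀ n, (F n).Nonempty)
    (htend : Tendsto (fun n => (F n).card) atTop atTop) (h𝒲 : IsFiniteCover 𝒲) (hα : 1 < α) :
    hRelL F 𝒲 π α = 0 :=
  (tendsto_logCoverRatio_of_one_lt hFne htend h𝒲 hα).liminf_eq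

lemma hRelU_eq_zero_of_DU_lt (hFne : ∀ n, (F n).Nonempty)
    (htend : Tendsto (fun n => (F n).card) atTop atTop) (h𝒲 : IsFiniteCover 𝒲)
    (hα : DU F 𝒲 π < α) : hRelU F 𝒲 π α = 0 :=
  eq_zero_of_critExp_lt (hRelU_antitone hFne)
    ⟨2, zero_le_two, hRelU_eq_zero_of_one_lt hFne htend h𝒲 one_lt_two⟩ hα

lemma hRelL_eq_zero_of_DL_lt (hFne : ∀ n, (F n).Nonempty)
    (htend : Tendsto (fun n => (F n).card) atTop atTop) (h𝒲 : IsFiniteCover 𝒲)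
    (hα : DL F 𝒲 π < α) : hRelL F 𝒲 π α = 0 :=
  eq_zero_of_critExp_lt (hRelL_antitone hFne)
    ⟨2, zero_le_two, hRelL_eq_zero_of_one_lt hFne htend h𝒲 one_lt_two⟩ hα

lemma logCoverRatio_eq_zero_iff {n : ℕ} :
    logCoverRatio F 𝒲 π α n = 0 ↔ Real.log (NRel (dynJoin (F n) 𝒲) π) ≤ 0 := by
  simp [logCoverRatio, ENNReal.div_eq_zero_iff]

lemma tendsto_logCoverRatio_of_forall_ge_eq {N : ℕ} (hN : ∀ m ≥ N, F m = F N) :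
    Tendsto (logCoverRatio F 𝒲 π α) atTop (𝓝 (logCoverRatio F 𝒲 π α N)) :=
  tendsto_const_nhds.congr' <|
    eventually_atTop.2 ⟨N, fun m hm => by simp only [logCoverRatio, hN m hm]⟩

lemma DU_eq_zero_of_forall_ge_eq {N : ℕ} (hN : ∀ m ≥ N, F m = F N) : DU F 𝒲 π = 0 :=
  critExp_eq_zero fun _ _ h => by
    rwa [hRelU_eq_limsup, (tendsto_logCoverRatio_of_forall_ge_eq hN).limsup_eq,
      logCoverRatio_eq_zero_iff] at h ⊢

lemma DL_eq_zero_of_forall_ge_eq {N : ℕ} (hN : ∀ m ≥ N, F m = F N) : DL F 𝒲 π = 0 :=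
  critExp_eq_zero fun _ _ h => by
    rwa [hRelL_eq_liminf, (tendsto_logCoverRatio_of_forall_ge_eq hN).liminf_eq,
      logCoverRatio_eq_zero_iff] at h ⊢

end EntropyDimension

lemma exists_forall_ge_eq_of_not_tendsto_card {G : Type*} {F : ℕ → Finset G} (hF : Monotone F)
    (h : ¬Tendsto (fun n => (F n).card) atTop atTop) : ∃ N, ∀ m ≥ N, F m = F N := by
  have hbdd : BddAbove (Set.range fun n => (F n).card) := by
    by_contra hunbdd
    refine h (tendsto_atTop_atTop_of_monotone (fun _ _ hmn => Finset.card_le_card (hF hmn))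
      fun b => ?_)
    obtain ⟨_, ⟨n, rfl⟩, hn⟩ := not_bddAbove_iff.1 hunbdd b
    exact ⟨n, hn.le⟩
  obtain ⟨N, hN⟩ := Nat.sSup_mem (Set.range_nonempty _) hbdd
  exact ⟨N, fun m hm =>
    (Finset.eq_of_subset_of_card_le (hF hm) ((le_csSup hbdd ⟨m, rfl⟩).trans_eq hN.symm)).symm⟩

section Join

variable {G X Y : Type*} [Group G] [MulAction G X] {F : ℕ → Finset G} {𝒰 𝒱 : Set (Set X)}
  {π : X → Y} {α : ℝ}

lemma logCoverRatio_covJoin_le (h𝒰 : IsFiniteCover 𝒰) (h𝒱 : IsFiniteCover 𝒱) (n : ℕ) :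
    logCoverRatio F (covJoin 𝒰 𝒱) π α n ≤ logCoverRatio F 𝒰 π α n + logCoverRatio F 𝒱 π α n := by
  rw [logCoverRatio, logCoverRatio, logCoverRatio, ENNReal.div_add_div_same,
    ← ENNReal.ofReal_add (Real.log_natCast_nonneg _) (Real.log_natCast_nonneg _)]
  refine ENNReal.div_le_div_right (ENNReal.ofReal_le_ofReal ?_) _
  exact (Real.log_natCast_mono (NRel_dynJoin_covJoin_le_mul h𝒰 h𝒱 (F n) π)).trans
    (Real.log_natCast_mul_le _ _)

lemma hRelL_le_hRelL_covJoin (h𝒰 : IsFiniteCover 𝒰) (h𝒱 : IsFiniteCover 𝒱) :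
    hRelL F 𝒰 π ≤ hRelL F (covJoin 𝒰 𝒱) π :=
  fun _ => liminf_le_liminf (.of_forall fun n => ENNReal.div_le_div_right
    (ENNReal.ofReal_le_ofReal
      (Real.log_natCast_mono (NRel_dynJoin_le_NRel_dynJoin_covJoin h𝒰 h𝒱 (F n) π))) _)

lemma hRelL_covJoin_eq_zero (h𝒰 : IsFiniteCover 𝒰) (h𝒱 : IsFiniteCover 𝒱)
    (hU : hRelU F 𝒰 π α = 0) (hV : hRelL F 𝒱 π α = 0) : hRelL F (covJoin 𝒰 𝒱) π α = 0 := by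
  have hlim : Tendsto (logCoverRatio F 𝒰 π α) atTop (𝓝 0) :=
    tendsto_of_le_liminf_of_limsup_le bot_le hU.le
  refine le_antisymm ?_ bot_le
  calc hRelL F (covJoin 𝒰 𝒱) π α
      ≤ atTop.liminf (logCoverRatio F 𝒰 π α + logCoverRatio F 𝒱 π α) :=
        liminf_le_liminf (.of_forall (logCoverRatio_covJoin_le h𝒰 h𝒱))
    _ = 0 := by rw [ENNReal.liminf_add_of_left_tendsto_zero hlim]; exact hV

variable (hFne : ∀ n, (F n).Nonempty) (htend : Tendsto (fun n => (F n).card) atTop atTop)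
include hFne htend

lemma DL_le_DL_covJoin (h𝒰 : IsFiniteCover 𝒰) (h𝒱 : IsFiniteCover 𝒱) :
    DL F 𝒰 π ≤ DL F (covJoin 𝒰 𝒱) π :=
  critExp_mono (hRelL_le_hRelL_covJoin h𝒰 h𝒱)
    ⟨2, zero_le_two, hRelL_eq_zero_of_one_lt hFne htend (h𝒰.covJoin h𝒱) one_lt_two⟩

lemma DL_covJoin_le (h𝒰 : IsFiniteCover 𝒰) (h𝒱 : IsFiniteCover 𝒱) :
    DL F (covJoin 𝒰 𝒱) π ≤ max (max (DL F 𝒰 π) (DL F 𝒱 π)) (min (DU F 𝒰 π) (DU F 𝒱 π)) := by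
  refine le_of_forall_gt_imp_ge_of_dense fun α hα => ?_
  obtain ⟨⟨hUα, hVα⟩, hminα⟩ := max_lt_iff.1 hα |>.imp_left max_lt_iff.1
  refine critExp_le (critExp_nonneg.trans hUα.le) ?_
  rcases min_lt_iff.1 hminα with hα' | hα'
  · exact hRelL_covJoin_eq_zero h𝒰 h𝒱 (hRelU_eq_zero_of_DU_lt hFne htend h𝒰 hα')
      (hRelL_eq_zero_of_DL_lt hFne htend h𝒱 hVα)
  · rw [covJoin_comm]
    exact hRelL_covJoin_eq_zero h𝒱 h𝒰 (hRelU_eq_zero_of_DU_lt hFne htend h𝒱 hα')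
      (hRelL_eq_zero_of_DL_lt hFne htend h𝒰 hUα)

end Join

theorem stmt6_general {G X Y : Type*} [Group G]
    [MetricSpace X]
    [MulAction G X]
    (π : X → Y)
    (F : ℕ → Finset G) (hF : IsFolnerSeq G F) (hFmono : ∀ n, F n ⊆ F (n + 1))
    (𝒰 𝒱 : Set (Set X)) (h𝒰 : IsOpenCover 𝒰) (h𝒱 : IsOpenCover 𝒱) :
    max (DL F 𝒰 π) (DL F 𝒱 π) ≤ DL F (covJoin 𝒰 𝒱) π ∧
    DL F (covJoin 𝒰 𝒱) π ≤
      max (max (DL F 𝒰 π) (DL F 𝒱 π)) (min (DU F 𝒰 π) (DU F 𝒱 π)) := by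
  by_cases htend : Tendsto (fun n => (F n).card) atTop atTop
  · refine ⟨max_le (DL_le_DL_covJoin hF.1 htend h𝒰.isFiniteCover h𝒱.isFiniteCover) ?_,
      DL_covJoin_le hF.1 htend h𝒰.isFiniteCover h𝒱.isFiniteCover⟩
    rw [covJoin_comm]
    exact DL_le_DL_covJoin hF.1 htend h𝒱.isFiniteCover h𝒰.isFiniteCover
  · obtain ⟨N, hN⟩ :=
      exists_forall_ge_eq_of_not_tendsto_card (monotone_nat_of_le_succ hFmono) htend
    simp only [DL_eq_zero_of_forall_ge_eq hN, DU_eq_zero_of_forall_ge_eq hN, max_self, min_self,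
      le_refl, and_self]

theorem stmt6 {G X Y : Type*} [Group G] [Countable G]
    [MetricSpace X] [CompactSpace X] [MetricSpace Y] [CompactSpace Y]
    [MulAction G X] [MulAction G Y]
    (hcX : ∀ g : G, Continuous fun x : X => g • x)
    (hcY : ∀ g : G, Continuous fun y : Y => g • y)
    (π : X → Y) (hπ : IsFactorMap G π)
    (F : ℕ → Finset G) (hF : IsFolnerSeq G F) (hFmono : ∀ n, F n ⊆ F (n + 1))
    (𝒰 𝒱 : Set (Set X)) (h𝒰 : IsOpenCover 𝒰) (h𝒱 : IsOpenCover 𝒱) :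
    max (DL F 𝒰 π) (DL F 𝒱 π) ≤ DL F (covJoin 𝒰 𝒱) π ∧
    DL F (covJoin 𝒰 𝒱) π ≤
      max (max (DL F 𝒰 π) (DL F 𝒱 π)) (min (DU F 𝒰 π) (DU F 𝒱 π)) :=
  stmt6_general π F hF hFmono 𝒰 𝒱 h𝒰 h𝒱
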